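/- Let M = 3/2 − √2. For real numbers f_1, f_2, y_1, y_2 set Â = (1 − f_1)(1 − y_1) + 3(1 − f_2)(1 − y_2), F̂_1 = (1 − f_1)(1 − y_1)/Â, F̂_2 = (1 − f_2)(1 − y_2)/Â, and define α̂(f_1,f_2,y_1,y_2) = (1/(1/2 − F̂_1)) · [ (1 − F̂_1)·y_1(1/2 − y_1)/(1 − y_1) + 3F̂_2·y_2(1/2 − y_2)/(1 − y_2) + 12M·f_1·F̂_2/(1 − f_2) ]. Then for all f_1, f_2, y_1, y_2 ∈ [0, 1/2] with 1/13 ≤ f_1 ≤ 1/2 and f_1 + 3f_2 = 1, one has α̂(f_1,f_2,y_1,y_2) ≤ 963/1000. -/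
import Mathlib
set_option maxHeartbeats 1000000

/-- `M = 3/2 − √2`, the maximum of `x(1/2 − x)/(1 − x)` over `[0, 1/2]`. -/
noncomputable def Mconst : ℝ := 3 / 2 - Real.sqrt 2

/-- The symmetrized contraction rate `α̂(f₁, f₂, y₁, y₂)`. -/
noncomputable def alphaHat (f1 f2 y1 y2 : ℝ) : ℝ :=
  let A := (1 - f1) * (1 - y1) + 3 * ((1 - f2) * (1 - y2))
  let F1 := (1 - f1) * (1 - y1) / A
  let F2 := (1 - f2) * (1 - y2) / A
  (1 / (1 / 2 - F1)) *
    ((1 - F1) * (y1 * (1 / 2 - y1) / (1 - y1)) +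
      3 * F2 * (y2 * (1 / 2 - y2) / (1 - y2)) +
      12 * Mconst * f1 * F2 / (1 - f2))

/-- A quadratic with nonneg coefficients and nonpositive discriminant is nonneg at `t ≥ 0`. -/
lemma quad_aux (a b c t : ℝ) (ha : 0 ≤ a) (hb : 0 ≤ b) (hc : 0 ≤ c) (ht : 0 ≤ t)
    (h : b ^ 2 ≤ 4 * (a * c)) : 0 ≤ a * t ^ 2 - b * t + c := by
  rcases eq_or_lt_of_le ha with h0 | h0
  · have hb0 : b = 0 := by nlinarith [sq_nonneg b]
    rw [← h0, hb0]; linarith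
  · nlinarith [sq_nonneg (2 * a * t - b), mul_pos h0 h0]

/-- Quartic certificate at `w = 1/5`. -/
lemma quartic1 (t : ℝ) (ht1 : 1 / 2 ≤ t) (ht2 : t ≤ 1) :
    0 ≤ -4 * t ^ 4 + (6810969 / 312500) * t ^ 3 - (40139298718961 / 1562500000000) * t ^ 2
        + (6329469 / 625000) * t - 1 := by
  nlinarith [mul_nonneg (mul_nonneg (sub_nonneg.2 ht1) (sub_nonneg.2 ht2))
      (sq_nonneg (t - 653 / 1000)),
    mul_nonneg (sub_nonneg.2 ht1) (sub_nonneg.2 ht2),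
    mul_nonneg (sub_nonneg.2 ht1) (sq_nonneg (t - 653 / 1000)),
    mul_nonneg (sub_nonneg.2 ht2) (sq_nonneg (t - 653 / 1000)), sq_nonneg (t - 653 / 1000)]

/-- Quartic certificate at `w = 4/9`. -/
lemma quartic2 (t : ℝ) (ht1 : 1 / 2 ≤ t) (ht2 : t ≤ 1) :
    0 ≤ -4 * t ^ 4 + (3834941 / 187500) * t ^ 3 - (12456772473481 / 562500000000) * t ^ 2
        + (3192941 / 375000) * t - 1 := by
  nlinarith [mul_nonneg (mul_nonneg (sub_nonneg.2 ht1) (sub_nonneg.2 ht2))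
      (sq_nonneg (t - 544 / 1000)),
    mul_nonneg (sub_nonneg.2 ht1) (sub_nonneg.2 ht2),
    mul_nonneg (sub_nonneg.2 ht1) (sq_nonneg (t - 544 / 1000)),
    mul_nonneg (sub_nonneg.2 ht2) (sq_nonneg (t - 544 / 1000)), sq_nonneg (t - 544 / 1000)]

/-- The two-variable core inequality, with `w = (1-f)/(2+f)` abstracted. -/
lemma Gwt (w t : ℝ) (hw1 : 1 / 5 ≤ w) (hw2 : w ≤ 4 / 9) (ht1 : 1 / 2 ≤ t) (ht2 : t ≤ 1) :
    (-2 * t ^ 2 + (6 - 963 / 1000 + 8 * (857865 / 10000000)) * t - 1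
        - 16 * (857865 / 10000000) * w * t) ^ 2
      ≤ 8 * t ^ 2 - 4 * (963 / 1000) * w * t := by
  rw [← sub_nonneg]
  have hid : 8 * t ^ 2 - 4 * (963 / 1000) * w * t -
      (-2 * t ^ 2 + (6 - 963 / 1000 + 8 * (857865 / 10000000)) * t - 1
        - 16 * (857865 / 10000000) * w * t) ^ 2
      = 45 / 11 * ((4 / 9 - w) *
          (-4 * t ^ 4 + (6810969 / 312500) * t ^ 3 - (40139298718961 / 1562500000000) * t ^ 2
            + (6329469 / 625000) * t - 1)
        + (w - 1 / 5) *
          (-4 * t ^ 4 + (3834941 / 187500) * t ^ 3 - (12456772473481 / 562500000000) * t ^ 2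
            + (3192941 / 375000) * t - 1))
        + (w - 1 / 5) * (4 / 9 - w) * (1372584 / 1000000) ^ 2 * t ^ 2 := by
    ring
  rw [hid]
  have e1 : 0 ≤ (4 / 9 - w) * (-4 * t ^ 4 + (6810969 / 312500) * t ^ 3
      - (40139298718961 / 1562500000000) * t ^ 2 + (6329469 / 625000) * t - 1) :=
    mul_nonneg (by linarith) (quartic1 t ht1 ht2)
  have e2 : 0 ≤ (w - 1 / 5) * (-4 * t ^ 4 + (3834941 / 187500) * t ^ 3
      - (12456772473481 / 562500000000) * t ^ 2 + (3192941 / 375000) * t - 1) :=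
    mul_nonneg (by linarith) (quartic2 t ht1 ht2)
  have e3 : 0 ≤ (w - 1 / 5) * (4 / 9 - w) * (1372584 / 1000000) ^ 2 * t ^ 2 :=
    mul_nonneg (mul_nonneg (mul_nonneg (by linarith) (by linarith)) (by positivity))
      (sq_nonneg t)
  have e4 : 0 ≤ 45 / 11 * ((4 / 9 - w) * (-4 * t ^ 4 + (6810969 / 312500) * t ^ 3
      - (40139298718961 / 1562500000000) * t ^ 2 + (6329469 / 625000) * t - 1)
      + (w - 1 / 5) * (-4 * t ^ 4 + (3834941 / 187500) * t ^ 3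
      - (12456772473481 / 562500000000) * t ^ 2 + (3192941 / 375000) * t - 1)) :=
    mul_nonneg (by norm_num) (add_nonneg e1 e2)
  exact add_nonneg e4 e3

/-- Closed form of `alphaHat` as a single fraction. -/
lemma alphaHat_eq (f1 y1 y2 : ℝ)
    (hy1pos : (0:ℝ) < 1 - y1) (hy2pos : (0:ℝ) < 1 - y2)
    (hfpos : (0:ℝ) < 2 + f1)
    (hXpos : 0 < (2 + f1) * (1 - y2) - (1 - f1) * (1 - y1))
    (hApos : (0:ℝ) < (1 - f1) * (1 - y1) + (2 + f1) * (1 - y2)) :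
    alphaHat f1 ((1 - f1) / 3) y1 y2 =
    (2 * (2 + f1) * (1 - y2) * ((1 - (1 - y1)) * ((1 - y1) - 1 / 2) * (1 - y2)
        + (1 - (1 - y2)) * ((1 - y2) - 1 / 2) * (1 - y1))
      + 24 * Mconst * f1 * (1 - y1) * (1 - y2) ^ 2) /
    ((1 - y1) * (1 - y2) * ((2 + f1) * (1 - y2) - (1 - f1) * (1 - y1))) := by
  show (1 / (1 / 2 - (1 - f1) * (1 - y1) /
      ((1 - f1) * (1 - y1) + 3 * ((1 - (1 - f1) / 3) * (1 - y2))))) *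
    ((1 - (1 - f1) * (1 - y1) /
        ((1 - f1) * (1 - y1) + 3 * ((1 - (1 - f1) / 3) * (1 - y2)))) *
        (y1 * (1 / 2 - y1) / (1 - y1)) +
      3 * ((1 - (1 - f1) / 3) * (1 - y2) /
        ((1 - f1) * (1 - y1) + 3 * ((1 - (1 - f1) / 3) * (1 - y2)))) *
        (y2 * (1 / 2 - y2) / (1 - y2)) +
      12 * Mconst * f1 * ((1 - (1 - f1) / 3) * (1 - y2) /
        ((1 - f1) * (1 - y1) + 3 * ((1 - (1 - f1) / 3) * (1 - y2)))) / (1 - (1 - f1) / 3)) = _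
  rw [show (1:ℝ) - (1 - f1) / 3 = (2 + f1) / 3 from by ring]
  rw [show (1 - f1) * (1 - y1) + 3 * ((2 + f1) / 3 * (1 - y2))
      = (1 - f1) * (1 - y1) + (2 + f1) * (1 - y2) from by ring]
  rw [show (1:ℝ) / 2 - (1 - f1) * (1 - y1) / ((1 - f1) * (1 - y1) + (2 + f1) * (1 - y2))
      = ((2 + f1) * (1 - y2) - (1 - f1) * (1 - y1)) /
        (2 * ((1 - f1) * (1 - y1) + (2 + f1) * (1 - y2))) from by
    field_simp
    ring]
  rw [one_div_div]
  rw [eq_div_iff (ne_of_gt (mul_pos (mul_pos hy1pos hy2pos) hXpos))]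
  field_simp [hy1pos.ne', hy2pos.ne', hfpos.ne', hApos.ne', hXpos.ne']
  ring

/-- For `f₁, f₂, y₁, y₂ ∈ [0, 1/2]` with `1/13 ≤ f₁ ≤ 1/2` and `f₁ + 3f₂ = 1`,
one has `α̂(f₁, f₂, y₁, y₂) ≤ 963/1000`. -/
theorem alphaHat_le (f1 f2 y1 y2 : ℝ)
    (hf1 : f1 ∈ Set.Icc (1 / 13 : ℝ) (1 / 2)) (hf2 : f2 ∈ Set.Icc (0 : ℝ) (1 / 2))
    (hy1 : y1 ∈ Set.Icc (0 : ℝ) (1 / 2)) (hy2 : y2 ∈ Set.Icc (0 : ℝ) (1 / 2))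
    (hsum : f1 + 3 * f2 = 1) :
    alphaHat f1 f2 y1 y2 ≤ 963 / 1000 := by
  obtain ⟨hf1a, hf1b⟩ := hf1
  obtain ⟨hy1a, hy1b⟩ := hy1
  obtain ⟨hy2a, hy2b⟩ := hy2
  have hf2eq : f2 = (1 - f1) / 3 := by linarith
  subst hf2eq
  clear hf2 hsum
  -- basic facts about √2 and Mconst
  have hs0 : (0 : ℝ) ≤ Real.sqrt 2 := Real.sqrt_nonneg 2
  have hs2 : Real.sqrt 2 ^ 2 = 2 := Real.sq_sqrt (by norm_num)
  have hM0 : 0 ≤ Mconst := by rw [Mconst]; nlinarith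
  have hM1 : Mconst ≤ 857865 / 10000000 := by rw [Mconst]; nlinarith
  -- abbreviations (opaque variables, to keep terms small)
  obtain ⟨t1, ht1def⟩ : ∃ t, t = 1 - y1 := ⟨_, rfl⟩
  obtain ⟨t2, ht2def⟩ : ∃ t, t = 1 - y2 := ⟨_, rfl⟩
  have ht1a : 1 / 2 ≤ t1 := by rw [ht1def]; linarith
  have ht1b : t1 ≤ 1 := by rw [ht1def]; linarith
  have ht2a : 1 / 2 ≤ t2 := by rw [ht2def]; linarith
  have ht2b : t2 ≤ 1 := by rw [ht2def]; linarith
  have hfpos : (0 : ℝ) < 2 + f1 := by linarith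
  have hhelp1 : (2 + f1) * (1 / 2) ≤ (2 + f1) * t2 :=
    mul_le_mul_of_nonneg_left ht2a (le_of_lt hfpos)
  have hhelp2 : (1 - f1) * t1 ≤ (1 - f1) * 1 :=
    mul_le_mul_of_nonneg_left ht1b (by linarith)
  have hdenpos : 0 < (2 + f1) * t2 - (1 - f1) * t1 := by linarith
  -- w and its bounds
  obtain ⟨w, hwdef⟩ : ∃ u : ℝ, u = (1 - f1) / (2 + f1) := ⟨_, rfl⟩
  have hwf : w * (2 + f1) = 1 - f1 := by rw [hwdef]; exact div_mul_cancel₀ _ (ne_of_gt hfpos)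
  have hw1 : 1 / 5 ≤ w := by rw [hwdef, le_div_iff₀ hfpos]; linarith
  have hw2 : w ≤ 4 / 9 := by rw [hwdef, div_le_iff₀ hfpos]; linarith
  -- the cleared quantities
  obtain ⟨X, hXdef⟩ : ∃ x : ℝ, x = 2 * (2 + f1) * t2 - (963 / 1000) * (1 - f1) := ⟨_, rfl⟩
  obtain ⟨R, hRdef⟩ : ∃ r : ℝ, r = (3 - 963 / 1000) * (2 + f1) * t2
      + 2 * (1 - t2) * (t2 - 1 / 2) * (2 + f1) + 24 * Mconst * f1 * t2 := ⟨_, rfl⟩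
  obtain ⟨Rm, hRmdef⟩ : ∃ r : ℝ, r = (3 - 963 / 1000) * (2 + f1) * t2
      + 2 * (1 - t2) * (t2 - 1 / 2) * (2 + f1) + 24 * (857865 / 10000000) * f1 * t2 := ⟨_, rfl⟩
  have hprod1 : 0 ≤ 2 * (1 - t2) * (t2 - 1 / 2) * (2 + f1) :=
    mul_nonneg (mul_nonneg (mul_nonneg (by norm_num) (by linarith)) (by linarith)) (by linarith)
  have hX0 : 0 ≤ X := by rw [hXdef]; linarith
  have hR0 : 0 ≤ R := by
    rw [hRdef]
    have h2 : 0 ≤ 24 * Mconst * f1 * t2 :=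
      mul_nonneg (mul_nonneg (mul_nonneg (by norm_num) hM0) (by linarith)) (by linarith)
    have h3 : 0 ≤ (3 - 963 / 1000) * (2 + f1) * t2 :=
      mul_nonneg (mul_nonneg (by norm_num) (by linarith)) (by linarith)
    linarith
  have hRRm : R ≤ Rm := by
    rw [hRdef, hRmdef]
    have : 0 ≤ (857865 / 10000000 - Mconst) * f1 * t2 :=
      mul_nonneg (mul_nonneg (by linarith) (by linarith)) (by linarith)
    linarith
  -- now express alphaHat as N / D
  have hy1pos : (0:ℝ) < 1 - y1 := by linarith
  have hy2pos : (0:ℝ) < 1 - y2 := by linarith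
  have hf2pos : (0:ℝ) < 1 - (1 - f1) / 3 := by linarith
  have hApos : 0 < (1 - f1) * (1 - y1) + 3 * ((1 - (1 - f1) / 3) * (1 - y2)) := by
    have h0 := add_pos (mul_pos (show (0:ℝ) < 1 - f1 by linarith) hy1pos)
      (mul_pos hfpos hy2pos)
    linarith
  have hhalf : 0 < 1 / 2 - (1 - f1) * (1 - y1) /
      ((1 - f1) * (1 - y1) + 3 * ((1 - (1 - f1) / 3) * (1 - y2))) := by
    rw [sub_pos, div_lt_iff₀ hApos]
    have h1 := hdenpos
    rw [ht1def, ht2def] at h1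
    linarith
  have hDpos : 0 < t1 * t2 * ((2 + f1) * t2 - (1 - f1) * t1) := by
    apply mul_pos (mul_pos _ _) hdenpos <;> linarith
  have hXpos' : 0 < (2 + f1) * (1 - y2) - (1 - f1) * (1 - y1) := by
    rw [ht1def, ht2def] at hdenpos; exact hdenpos
  have hApos' : (0:ℝ) < (1 - f1) * (1 - y1) + (2 + f1) * (1 - y2) :=
    add_pos (mul_pos (by linarith) hy1pos) (mul_pos hfpos hy2pos)
  have hval := alphaHat_eq f1 y1 y2 hy1pos hy2pos hfpos hXpos' hApos'
  rw [← ht1def, ← ht2def] at hval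
  -- core inequality for Rm via Gwt
  have hG := Gwt w t2 hw1 hw2 ht2a ht2b
  have hRmP : Rm = (2 + f1) * (-2 * t2 ^ 2 + (6 - 963 / 1000 + 8 * (857865 / 10000000)) * t2
      - 1 - 16 * (857865 / 10000000) * w * t2) := by
    rw [hRmdef]
    linear_combination (16 * (857865 / 10000000) * t2) * hwf
  have hGmul := mul_le_mul_of_nonneg_left hG (sq_nonneg (2 + f1))
  have hkeyRm : Rm ^ 2 ≤ 4 * (X * ((2 + f1) * t2)) := by
    rw [hXdef, hRmP]
    calc ((2 + f1) * (-2 * t2 ^ 2 + (6 - 963 / 1000 + 8 * (857865 / 10000000)) * t2 - 1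
          - 16 * (857865 / 10000000) * w * t2)) ^ 2
        ≤ (2 + f1) ^ 2 * (8 * t2 ^ 2 - 4 * (963 / 1000) * w * t2) := by
          calc _ = (2 + f1) ^ 2 * (-2 * t2 ^ 2 + (6 - 963 / 1000 + 8 * (857865 / 10000000)) * t2
              - 1 - 16 * (857865 / 10000000) * w * t2) ^ 2 := by ring
          _ ≤ _ := hGmul
      _ = 4 * ((2 * (2 + f1) * t2 - 963 / 1000 * (1 - f1)) * ((2 + f1) * t2)) := by
          linear_combination (-4 * (963 / 1000) * t2 * (2 + f1)) * hwf
  have hkeyR : R ^ 2 ≤ 4 * (X * ((2 + f1) * t2)) :=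
    le_trans (pow_le_pow_left₀ hR0 hRRm 2) hkeyRm
  -- the quadratic in t1 is nonneg
  have hquad : 0 ≤ X * t1 ^ 2 - R * t1 + (2 + f1) * t2 :=
    quad_aux X R ((2 + f1) * t2) t1 hX0 hR0
      (mul_nonneg (by linarith) (by linarith)) (by linarith) hkeyR
  rw [hval, div_le_iff₀ hDpos]
  have hfinal : 963 / 1000 * (t1 * t2 * ((2 + f1) * t2 - (1 - f1) * t1)) -
      (2 * (2 + f1) * t2 * ((1 - t1) * (t1 - 1 / 2) * t2 + (1 - t2) * (t2 - 1 / 2) * t1)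
        + 24 * Mconst * f1 * t1 * t2 ^ 2)
      = t2 * (X * t1 ^ 2 - R * t1 + (2 + f1) * t2) := by
    rw [hXdef, hRdef]; ring
  linarith [hfinal, mul_nonneg (by linarith : (0:ℝ) ≤ t2) hquad]
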